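/- Let g be a Schwartz function on ℝ and let α, β be non-negative integers. Then there exists a constant C > 0 such that ∑_{k∈ℤ, |k|≥3} ∫_ℝ |ξ^α · Fg(ξ) · ψ^{(β)}(ξ−k)|² dξ ≤ C, where ψ^{(β)} denotes the β-th derivative of ψ. -/

import Mathlib

open MeasureTheory Complex
open scoped ENNReal RealInnerProductSpace

noncomputable section

noncomputable section

/-- `ψ` is an admissible Wiener-decomposition bump function on `ℝ`: real-valued, `C^∞`,
supported in the closed unit ball `B(0,1)`, even, non-negative, and with
`∑_{k ∈ ℤ} ψ(ξ - k) = 1` for every `ξ`. -/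
def IsWienerBump1 (ψ : ℝ → ℝ) : Prop :=
  ContDiff ℝ (⊤ : ℕ∞) ψ ∧ (∀ ξ : ℝ, ξ ∉ Metric.closedBall (0 : ℝ) 1 → ψ ξ = 0) ∧
    (∀ ξ : ℝ, ψ (-ξ) = ψ ξ) ∧ (∀ ξ : ℝ, 0 ≤ ψ ξ) ∧
    (∀ ξ : ℝ, ∑' k : ℤ, ψ (ξ - (k : ℝ)) = 1)

/-- Fourier transform on `ℝ` with the convention `(2π)^{-1/2} ∫ e^{-i x ξ} f(x) dx`. -/
def FT1 (f : ℝ → ℂ) (ξ : ℝ) : ℂ :=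
  (((2 * Real.pi) ^ (-(1 : ℝ) / 2) : ℝ) : ℂ) *
    ∫ x : ℝ, Complex.exp (-Complex.I * ((x * ξ : ℝ) : ℂ)) * f x

/-- `(f, F)` is an `L²`-Fourier pair on `ℝ`. -/
def IsL2FourierPair1 (f F : ℝ → ℂ) : Prop :=
  MemLp f 2 volume ∧ MemLp F 2 volume ∧
    ∀ φ : ℝ → ℂ, Integrable φ volume → MemLp φ 2 volume →
      ∫ ξ : ℝ, F ξ * φ ξ = ∫ x : ℝ, f x * FT1 φ x

/-- Frequency projection `ψ(D-k)` composed with Fourier multiplier `e^{iθ(ξ)}`: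
`x ↦ (2π)^{-1/2} ∫ e^{i(xξ + θ(ξ))} ψ(ξ-k) F(ξ) dξ`, where `F = Ff`. -/
def projPhase1 (ψ : ℝ → ℝ) (F : ℝ → ℂ) (θ : ℝ → ℝ) (k : ℤ) (x : ℝ) : ℂ :=
  (((2 * Real.pi) ^ (-(1 : ℝ) / 2) : ℝ) : ℂ) *
    ∫ ξ : ℝ, Complex.exp (Complex.I * ((x * ξ + θ ξ : ℝ) : ℂ)) * ((ψ (ξ - (k : ℝ)) : ℝ) : ℂ) * F ξ

/-- `ψ(D-k)` applied to a function with Fourier transform `F`. -/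
def proj1 (ψ : ℝ → ℝ) (F : ℝ → ℂ) (k : ℤ) (x : ℝ) : ℂ :=
  projPhase1 ψ F (fun _ => 0) k x

/-- `ψ(D-k) S₁(t)`: Airy/KdV propagator composed with the projection,
`x ↦ (2π)^{-1/2} ∫ e^{i(xξ + tξ³)} ψ(ξ-k) F(ξ) dξ`. -/
def projKdV (ψ : ℝ → ℝ) (F : ℝ → ℂ) (t : ℝ) (k : ℤ) (x : ℝ) : ℂ :=
  projPhase1 ψ F (fun ξ => t * ξ ^ 3) k x

open scoped FourierTransform

/-- Let `g` be a Schwartz function on `ℝ` and `a, b ∈ ℕ`. Then there is a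
constant `C > 0` with `∑_{k∈ℤ, |k|≥3} ∫_ℝ |ξ^a ⋅ Fg(ξ) ⋅ ψ^{(b)}(ξ-k)|² dξ ≤ C`. -/
theorem statement4 (ψ : ℝ → ℝ) (hψ : IsWienerBump1 ψ) (g : SchwartzMap ℝ ℂ) (a b : ℕ) :
    ∃ C : ℝ, 0 < C ∧
      Summable (fun k : {k : ℤ // 3 ≤ |k|} =>
        ∫ ξ : ℝ, ‖(ξ : ℂ) ^ a * FT1 (⇑g) ξ * ((iteratedDeriv b ψ (ξ - (k.1 : ℝ)) : ℝ) : ℂ)‖ ^ 2) ∧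
      (∑' k : {k : ℤ // 3 ≤ |k|},
        ∫ ξ : ℝ, ‖(ξ : ℂ) ^ a * FT1 (⇑g) ξ * ((iteratedDeriv b ψ (ξ - (k.1 : ℝ)) : ℝ) : ℂ)‖ ^ 2) ≤ C := by
  obtain ⟨hsmooth, hsupp, -, -, -⟩ := hψ
  -- iterated derivatives of ψ vanish where |ξ| > 1
  have hvan : ∀ n : ℕ, ∀ ξ : ℝ, 1 < |ξ| → iteratedDeriv n ψ ξ = 0 := by
    intro n
    induction n with
    | zero =>
      intro ξ hξ
      rw [iteratedDeriv_zero]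
      apply hsupp
      simp only [Metric.mem_closedBall, Real.dist_eq, sub_zero]
      linarith
    | succ n ih =>
      intro ξ hξ
      rw [iteratedDeriv_succ]
      have hopen : IsOpen {x : ℝ | 1 < |x|} := isOpen_lt continuous_const continuous_abs
      have hev : iteratedDeriv n ψ =ᶠ[nhds ξ] fun _ => (0 : ℝ) :=
        Filter.eventuallyEq_of_mem (hopen.mem_nhds hξ) (fun x hx => ih x hx)
      rw [hev.deriv_eq, deriv_const]
  -- bound on the b-th derivative
  have hcs : HasCompactSupport (iteratedDeriv b ψ) := by
    apply HasCompactSupport.intro (isCompact_closedBall (0 : ℝ) 1)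
    intro x hx
    apply hvan
    simpa only [Metric.mem_closedBall, Real.dist_eq, sub_zero, not_le] using hx
  obtain ⟨M, hM⟩ := hcs.exists_bound_of_continuous (hsmooth.continuous_iteratedDeriv b (by exact_mod_cast le_top))
  have hM0 : 0 ≤ M := le_trans (norm_nonneg _) (hM 0)
  -- Schwartz decay of the Fourier transform
  obtain ⟨C0, hC0pos, hC0⟩ := (SchwartzMap.fourierTransformCLM ℂ g).decay (a + 1) 0
  have hC0' : ∀ x : ℝ, |x| ^ (a + 1) * ‖𝓕 (⇑g) x‖ ≤ C0 := by
    intro x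
    have := hC0 x
    rwa [norm_iteratedFDeriv_zero, SchwartzMap.fourierTransformCLM_apply,
      Real.norm_eq_abs] at this
  have hC0nn : 0 ≤ C0 := hC0pos.le
  have hπ : (0 : ℝ) < 2 * Real.pi := by positivity
  -- relate FT1 to 𝓕
  have hFTnorm : ∀ ξ : ℝ, ‖FT1 (⇑g) ξ‖ ≤ ‖𝓕 (⇑g) (ξ / (2 * Real.pi))‖ := by
    intro ξ
    have h1 : FT1 (⇑g) ξ =
        (((2 * Real.pi) ^ (-(1 : ℝ) / 2) : ℝ) : ℂ) * 𝓕 (⇑g) (ξ / (2 * Real.pi)) := by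
      have heq : (fun x : ℝ => Complex.exp (-Complex.I * ((x * ξ : ℝ) : ℂ)) * g x)
          = fun x : ℝ => Complex.exp
              (((-2 * Real.pi * x * (ξ / (2 * Real.pi)) : ℝ) : ℂ) * Complex.I) • g x := by
        funext x
        rw [smul_eq_mul]
        congr 2
        have h2 : -2 * Real.pi * x * (ξ / (2 * Real.pi)) = -(x * ξ) := by
          field_simp
        rw [h2]
        push_cast
        ring
      rw [FT1, Real.fourier_real_eq_integral_exp_smul, heq]
    rw [h1, norm_mul, Complex.norm_real, Real.norm_eq_abs]
    have hle1 : |(2 * Real.pi) ^ (-(1 : ℝ) / 2)| ≤ 1 := by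
      rw [_root_.abs_of_nonneg (Real.rpow_nonneg hπ.le _)]
      apply Real.rpow_le_one_of_one_le_of_nonpos
      · nlinarith [Real.pi_gt_three]
      · norm_num
    nlinarith [norm_nonneg (𝓕 (⇑g) (ξ / (2 * Real.pi)))]
  set K : ℝ := (2 * Real.pi) ^ (a + 1) * C0 with hK
  have hKnn : 0 ≤ K := by positivity
  -- decay estimate
  have hdecay : ∀ ξ : ℝ, 2 ≤ |ξ| → ‖(ξ : ℂ) ^ a * FT1 (⇑g) ξ‖ ≤ K / |ξ| := by
    intro ξ hξ
    have hξ0 : (0 : ℝ) < |ξ| := by linarith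
    rw [norm_mul, norm_pow, Complex.norm_real, Real.norm_eq_abs, le_div_iff₀ hξ0]
    have habs : |ξ / (2 * Real.pi)| = |ξ| / (2 * Real.pi) := by
      rw [abs_div, _root_.abs_of_pos hπ]
    have h2 := hC0' (ξ / (2 * Real.pi))
    rw [habs, div_pow] at h2
    have h3 : |ξ| ^ (a + 1) * ‖𝓕 (⇑g) (ξ / (2 * Real.pi))‖ ≤ K := by
      have hpow : (0 : ℝ) < (2 * Real.pi) ^ (a + 1) := by positivity
      rw [hK]
      calc |ξ| ^ (a + 1) * ‖𝓕 (⇑g) (ξ / (2 * Real.pi))‖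
          = (2 * Real.pi) ^ (a + 1) *
            (|ξ| ^ (a + 1) / (2 * Real.pi) ^ (a + 1) * ‖𝓕 (⇑g) (ξ / (2 * Real.pi))‖) := by
            field_simp
        _ ≤ (2 * Real.pi) ^ (a + 1) * C0 := mul_le_mul_of_nonneg_left h2 hpow.le
    calc |ξ| ^ a * ‖FT1 (⇑g) ξ‖ * |ξ| = |ξ| ^ (a + 1) * ‖FT1 (⇑g) ξ‖ := by ring
      _ ≤ |ξ| ^ (a + 1) * ‖𝓕 (⇑g) (ξ / (2 * Real.pi))‖ :=
          mul_le_mul_of_nonneg_left (hFTnorm ξ) (by positivity)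
      _ ≤ K := h3
  set A : ℝ := 2 * (2 * K * M) ^ 2 with hA
  -- the key per-k integral bound
  have hint : ∀ k : ℤ, 3 ≤ |k| →
      (∫ ξ : ℝ, ‖(ξ : ℂ) ^ a * FT1 (⇑g) ξ * ((iteratedDeriv b ψ (ξ - (k : ℝ)) : ℝ) : ℂ)‖ ^ 2)
        ≤ A * (1 / ((k : ℝ)) ^ 2) := by
    intro k hk
    have hk3 : (3 : ℝ) ≤ |(k : ℝ)| := by
      rw [← Int.cast_abs]; exact_mod_cast hk
    have hk0 : (0 : ℝ) < |(k : ℝ)| := by linarith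
    have hind : Integrable ((Set.Icc ((k : ℝ) - 1) ((k : ℝ) + 1)).indicator
        fun _ => (K * (2 / |(k : ℝ)|) * M) ^ 2) volume := by
      rw [integrable_indicator_iff measurableSet_Icc]
      refine (integrableOn_const_iff).mpr (Or.inr ?_)
      rw [Real.volume_Icc]; exact ENNReal.ofReal_lt_top
    have hptwise : ∀ ξ : ℝ,
        ‖(ξ : ℂ) ^ a * FT1 (⇑g) ξ * ((iteratedDeriv b ψ (ξ - (k : ℝ)) : ℝ) : ℂ)‖ ^ 2
          ≤ (Set.Icc ((k : ℝ) - 1) ((k : ℝ) + 1)).indicator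
              (fun _ => (K * (2 / |(k : ℝ)|) * M) ^ 2) ξ := by
      intro ξ
      by_cases hξ : ξ ∈ Set.Icc ((k : ℝ) - 1) ((k : ℝ) + 1)
      · rw [Set.indicator_of_mem hξ]
        obtain ⟨hξ1, hξ2⟩ := hξ
        have hlow : |(k : ℝ)| - 1 ≤ |ξ| := by
          have h := abs_sub_abs_le_abs_sub (k : ℝ) ξ
          have h' : |(k : ℝ) - ξ| ≤ 1 := abs_le.mpr ⟨by linarith, by linarith⟩
          linarith
        have hξ2' : (2 : ℝ) ≤ |ξ| := by linarith
        have hξ0 : (0 : ℝ) < |ξ| := by linarith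
        have h1 : ‖(ξ : ℂ) ^ a * FT1 (⇑g) ξ‖ ≤ K / |ξ| := hdecay ξ hξ2'
        have h2 : K / |ξ| ≤ K * (2 / |(k : ℝ)|) := by
          rw [div_eq_mul_one_div]
          refine mul_le_mul_of_nonneg_left ?_ hKnn
          rw [div_le_div_iff₀ hξ0 hk0]
          linarith
        have h3 : ‖((iteratedDeriv b ψ (ξ - (k : ℝ)) : ℝ) : ℂ)‖ ≤ M := by
          rw [Complex.norm_real]; exact hM _
        have h4 : ‖(ξ : ℂ) ^ a * FT1 (⇑g) ξ * ((iteratedDeriv b ψ (ξ - (k : ℝ)) : ℝ) : ℂ)‖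
            ≤ K * (2 / |(k : ℝ)|) * M := by
          rw [norm_mul]
          exact mul_le_mul (h1.trans h2) h3 (norm_nonneg _)
            (by positivity : (0 : ℝ) ≤ K * (2 / |(k : ℝ)|))
        exact pow_le_pow_left₀ (norm_nonneg _) h4 2
      · rw [Set.indicator_of_notMem hξ]
        have h1 : 1 < |ξ - (k : ℝ)| := by
          rw [Set.mem_Icc, not_and_or] at hξ
          push_neg at hξ
          rcases hξ with h | h
          · rw [abs_sub_comm]
            exact lt_of_lt_of_le (by linarith) (le_abs_self _)
          · exact lt_of_lt_of_le (by linarith) (le_abs_self _)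
        rw [hvan b _ h1]
        simp
    have hmono := integral_mono_of_nonneg
      (Filter.Eventually.of_forall (fun ξ => sq_nonneg _)) hind
      (Filter.Eventually.of_forall hptwise)
    refine hmono.trans ?_
    rw [integral_indicator_const _ measurableSet_Icc, measureReal_def, Real.volume_Icc]
    have hvol : (ENNReal.ofReal ((k : ℝ) + 1 - ((k : ℝ) - 1))).toReal = 2 := by
      rw [ENNReal.toReal_ofReal (by linarith)]; ring
    rw [hvol, smul_eq_mul, hA]
    have hksq : |(k : ℝ)| ^ 2 = (k : ℝ) ^ 2 := sq_abs _
    have hkne : |(k : ℝ)| ≠ 0 := ne_of_gt hk0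
    field_simp
    rw [← hksq]
    ring_nf
    have hk1 : |(k : ℝ)| ^ 2 * |(k : ℝ)|⁻¹ ^ 2 = 1 := by
      rw [← mul_pow, mul_inv_cancel₀ hkne, one_pow]
    rw [mul_assoc (K ^ 2 * M ^ 2), hk1]
    nlinarith [sq_nonneg (K * M), _root_.sq_abs ((k : ℝ))]
  -- summable comparison sequence
  have hsum1 : Summable (fun n : ℤ => (1 : ℝ) / (n : ℝ) ^ 2) :=
    Real.summable_one_div_int_pow.mpr one_lt_two
  have hsum2 : Summable (fun k : {k : ℤ // 3 ≤ |k|} => A * (1 / ((k.1 : ℝ)) ^ 2)) :=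
    ((hsum1.mul_left A).subtype _)
  have htermnn : ∀ k : {k : ℤ // 3 ≤ |k|},
      0 ≤ ∫ ξ : ℝ, ‖(ξ : ℂ) ^ a * FT1 (⇑g) ξ *
        ((iteratedDeriv b ψ (ξ - (k.1 : ℝ)) : ℝ) : ℂ)‖ ^ 2 :=
    fun k => integral_nonneg (fun ξ => sq_nonneg _)
  have hsumterm : Summable (fun k : {k : ℤ // 3 ≤ |k|} =>
      ∫ ξ : ℝ, ‖(ξ : ℂ) ^ a * FT1 (⇑g) ξ *
        ((iteratedDeriv b ψ (ξ - (k.1 : ℝ)) : ℝ) : ℂ)‖ ^ 2) :=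
    Summable.of_nonneg_of_le htermnn (fun k => hint k.1 k.2) hsum2
  refine ⟨(∑' k : {k : ℤ // 3 ≤ |k|}, A * (1 / ((k.1 : ℝ)) ^ 2)) + 1, ?_, hsumterm, ?_⟩
  · have : 0 ≤ ∑' k : {k : ℤ // 3 ≤ |k|}, A * (1 / ((k.1 : ℝ)) ^ 2) :=
      tsum_nonneg (fun k => by positivity)
    linarith
  · have hle := hsumterm.tsum_le_tsum (fun k : {k : ℤ // 3 ≤ |k|} => hint k.1 k.2) hsum2
    linarith
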